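/- For every d ≥ 0 the following closed forms hold: (i) with ψ⁰_{0,1}(t) = (1/√2)(2t e^{t} 1_{(−∞,0)}(t) + e^{−|t|}) and ψ⁰_{1,1}(t) = −(1/√2)(2t e^{−t} 1_{[0,∞)}(t) + e^{−|t|}), one has ψ⁰_{0,1}(0)ψ⁰_{0,1}(d) + ψ⁰_{1,1}(0)ψ⁰_{1,1}(d) = (1+d)e^{−d}; (ii) with ψ⁰_{0,2}(t) = (2/√(4!))(2(−t²+t)e^{t} 1_{(−∞,0)}(t) − e^{−|t|}), ψ⁰_{1,2}(t) = (4/√(4!))(|t|+1)e^{−|t|}, and ψ⁰_{2,2}(t) = (2/√(4!))(−2(t²+t)e^{−t} 1_{[0,∞)}(t) − e^{−|t|}), one has ∑_{m=0}^{2} ψ⁰_{m,2}(0)ψ⁰_{m,2}(d) = (1 + d + d²/3)e^{−d}. -/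

import Mathlib

open Real Finset

/-- Null-space function `ψ⁰_{0,1}` of the Matérn-3/2 kernel. -/
noncomputable def psi01 (t : ℝ) : ℝ :=
  (1 / Real.sqrt 2) *
    (Set.indicator (Set.Iio (0 : ℝ)) (fun s => 2 * s * Real.exp s) t + Real.exp (-|t|))

/-- Null-space function `ψ⁰_{1,1}` of the Matérn-3/2 kernel. -/
noncomputable def psi11 (t : ℝ) : ℝ :=
  -(1 / Real.sqrt 2) *
    (Set.indicator (Set.Ici (0 : ℝ)) (fun s => 2 * s * Real.exp (-s)) t + Real.exp (-|t|))

/-- Null-space function `ψ⁰_{0,2}` of the Matérn-5/2 kernel. -/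
noncomputable def psi02 (t : ℝ) : ℝ :=
  (2 / Real.sqrt (Nat.factorial 4)) *
    (Set.indicator (Set.Iio (0 : ℝ)) (fun s => 2 * (-s ^ 2 + s) * Real.exp s) t - Real.exp (-|t|))

/-- Null-space function `ψ⁰_{1,2}` of the Matérn-5/2 kernel. -/
noncomputable def psi12 (t : ℝ) : ℝ :=
  (4 / Real.sqrt (Nat.factorial 4)) * (|t| + 1) * Real.exp (-|t|)

/-- Null-space function `ψ⁰_{2,2}` of the Matérn-5/2 kernel. -/
noncomputable def psi22 (t : ℝ) : ℝ :=
  (2 / Real.sqrt (Nat.factorial 4)) *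
    (Set.indicator (Set.Ici (0 : ℝ)) (fun s => -(2 * (s ^ 2 + s)) * Real.exp (-s)) t -
      Real.exp (-|t|))

/-! On `[0, ∞)` the indicator on `(-∞, 0)` vanishes and the one on `[0, ∞)` is active, so each
`ψ⁰_{m,ν}(t)` with `t ≥ 0` is a polynomial in `t` times `e^{-t}`. Both sides are then
`e^{-d}` times a polynomial in `d`, and the identities reduce to
`(1 + (1 + 2d)) / 2 = 1 + d` and `(4 + 16 (d + 1) + 4 (2d² + 2d + 1)) / 24 = 1 + d + d²/3`. -/

section Nonneg

variable {t : ℝ}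

lemma psi01_of_nonneg (ht : 0 ≤ t) : psi01 t = Real.exp (-t) / Real.sqrt 2 := by
  rw [psi01, Set.indicator_of_notMem (by simpa using ht), abs_of_nonneg ht]
  ring

lemma psi11_of_nonneg (ht : 0 ≤ t) :
    psi11 t = -((2 * t + 1) * Real.exp (-t)) / Real.sqrt 2 := by
  rw [psi11, Set.indicator_of_mem (Set.mem_Ici.mpr ht), abs_of_nonneg ht]
  ring

lemma psi02_of_nonneg (ht : 0 ≤ t) :
    psi02 t = -(2 * Real.exp (-t)) / Real.sqrt (Nat.factorial 4) := by
  rw [psi02, Set.indicator_of_notMem (by simpa using ht), abs_of_nonneg ht]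
  ring

lemma psi12_of_nonneg (ht : 0 ≤ t) :
    psi12 t = 4 * (t + 1) * Real.exp (-t) / Real.sqrt (Nat.factorial 4) := by
  rw [psi12, abs_of_nonneg ht]
  ring

lemma psi22_of_nonneg (ht : 0 ≤ t) :
    psi22 t = -(2 * (2 * t ^ 2 + 2 * t + 1) * Real.exp (-t)) / Real.sqrt (Nat.factorial 4) := by
  rw [psi22, Set.indicator_of_mem (Set.mem_Ici.mpr ht), abs_of_nonneg ht]
  ring

end Nonneg

lemma sq_sqrt_factorial_four : Real.sqrt (Nat.factorial 4) ^ 2 = 24 := by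
  rw [Real.sq_sqrt (by positivity)]
  norm_num [Nat.factorial]

/-- Closed forms of the Matérn-3/2 and Matérn-5/2 kernels from their null-space functions. -/
theorem matern_nullspace_closed_forms (d : ℝ) (hd : 0 ≤ d) :
    (psi01 0 * psi01 d + psi11 0 * psi11 d = (1 + d) * Real.exp (-d)) ∧
    (psi02 0 * psi02 d + psi12 0 * psi12 d + psi22 0 * psi22 d =
      (1 + d + d ^ 2 / 3) * Real.exp (-d)) := by
  have h0 : (0 : ℝ) ≤ 0 := le_rfl
  rw [psi01_of_nonneg h0, psi01_of_nonneg hd, psi11_of_nonneg h0, psi11_of_nonneg hd,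
    psi02_of_nonneg h0, psi02_of_nonneg hd, psi12_of_nonneg h0, psi12_of_nonneg hd,
    psi22_of_nonneg h0, psi22_of_nonneg hd]
  simp only [neg_zero, Real.exp_zero]
  have h2ne : Real.sqrt 2 ≠ 0 := by positivity
  have h24ne : Real.sqrt (Nat.factorial 4) ≠ 0 := by positivity
  constructor
  · field_simp
    rw [Real.sq_sqrt zero_le_two]
    ring
  · field_simp
    rw [sq_sqrt_factorial_four]
    ring
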